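/- arXiv:1911.01118 — 3 statements merged into one kernel-verified Lean document; each statement's English description precedes it below -/
import Mathlib

section
/- For every integer n ≥ 4, the cycle C_n of order n satisfies prc(C_n) = rc(C_n) = ⌈n/2⌉. -/
open SimpleGraph

variable {V : Type*}

/-- A walk is rainbow under edge colouring `c` if its edges receive pairwise distinct colours. -/
def SimpleGraph.Walk.IsRainbow {G : SimpleGraph V} {u v : V} (c : Sym2 V → ℕ) (p : G.Walk u v) :
    Prop :=
  (p.edges.map c).Nodup

/-- `G` is rainbow connected under the edge colouring `c`: any two vertices are joined by a
rainbow path. -/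
def SimpleGraph.RainbowConnected (G : SimpleGraph V) (c : Sym2 V → ℕ) : Prop :=
  ∀ u v : V, ∃ p : G.Walk u v, p.IsPath ∧ p.IsRainbow c

/-- `c` is a proper edge colouring of `G`: adjacent edges receive distinct colours. -/
def SimpleGraph.IsProperEdgeColoring (G : SimpleGraph V) (c : Sym2 V → ℕ) : Prop :=
  ∀ ⦃u v w : V⦄, G.Adj u v → G.Adj u w → v ≠ w → c s(u, v) ≠ c s(u, w)

/-- The colouring `c` uses at most `k` colours on the edges of `G`. -/
def SimpleGraph.ColorsLE (G : SimpleGraph V) (c : Sym2 V → ℕ) (k : ℕ) : Prop :=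
  ∀ e ∈ G.edgeSet, c e < k

/-- The rainbow connection number `rc(G)`. -/
noncomputable def SimpleGraph.rcNumber (G : SimpleGraph V) : ℕ :=
  sInf {k | ∃ c : Sym2 V → ℕ, G.ColorsLE c k ∧ G.RainbowConnected c}

/-- The proper rainbow connection number `prc(G)`. -/
noncomputable def SimpleGraph.prcNumber (G : SimpleGraph V) : ℕ :=
  sInf {k | ∃ c : Sym2 V → ℕ, G.ColorsLE c k ∧ G.IsProperEdgeColoring c ∧ G.RainbowConnected c}

/-- The chromatic index `χ'(G)`. -/
noncomputable def SimpleGraph.chromaticIndex (G : SimpleGraph V) : ℕ :=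
  sInf {k | ∃ c : Sym2 V → ℕ, G.ColorsLE c k ∧ G.IsProperEdgeColoring c}

/-!
For the upper bound, colour the edge `{i, i + 1}` of `C_n` by `i mod ⌈n/2⌉`. Any two vertices are
joined by an arc of at most `⌊n/2⌋` consecutive edges, and the indices of such an arc are pairwise
distinct modulo `⌈n/2⌉`; with `n ≥ 4` this also makes adjacent edges differently coloured.

For the lower bound, lift a walk to `ℤ`: a walk of length `ℓ` has an integer displacement `d`
with `|d| ≤ ℓ`, and `d = ℓ` only for the forward arc. Hence vertices at cyclic distance `⌊n/2⌋`
need `⌊n/2⌋` colours, which settles even `n`. For `n = 2L + 1` with only `L` colours, the rainbow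
path from `t` to `t + L` must be the forward arc, so every window of `L` consecutive edges uses all
`L` colours. Comparing the windows at `t` and `t + 1` shows the colouring is `L`-periodic; as it is
also `(2L + 1)`-periodic it is constant, which contradicts the rainbow windows.
-/

theorem Function.periodic_of_forall_nodup_window {a : ℕ → ℕ} {L : ℕ} (hlt : ∀ t, a t < L)
    (hwin : ∀ t, ((List.range L).map fun j => a (t + j)).Nodup) : Function.Periodic a L := by
  intro t
  have hL : 0 < L := (Nat.zero_le _).trans_lt (hlt 0)
  have hfull : ∀ s, ((List.range L).map fun j => a (s + j)).toFinset = Finset.range L :=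
    fun s => Finset.eq_of_subset_of_card_le
      (fun x hx => by
        obtain ⟨j, -, rfl⟩ := List.mem_map.1 (List.mem_toFinset.1 hx)
        exact Finset.mem_range.2 (hlt _))
      (by simp [List.toFinset_card_of_nodup (hwin s)])
  have hmem : a t ∈ (List.range L).map fun j => a (t + 1 + j) := by
    rw [← List.mem_toFinset, hfull, ← hfull t, List.mem_toFinset]
    exact List.mem_map.2 ⟨0, List.mem_range.2 hL, rfl⟩
  obtain ⟨j, hj, hjt⟩ := List.mem_map.1 hmem
  rw [List.mem_range] at hj
  obtain rfl : j + 1 = L := by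
    by_contra hne
    have := List.inj_on_of_nodup_map (hwin t) (List.mem_range.2 (show j + 1 < L by omega))
      (List.mem_range.2 hL) (by rw [add_zero, ← hjt, add_right_comm, add_assoc])
    omega
  rw [← hjt, add_right_comm, add_assoc]

theorem Nat.add_mod_mod_ne_of_lt_half {n u i j : ℕ} (hu : u < n) (hij : i < j) (hj : j < n / 2) :
    (u + i) % n % ((n + 1) / 2) ≠ (u + j) % n % ((n + 1) / 2) := by
  have hmod : ∀ x < n, x % ((n + 1) / 2) = if x < (n + 1) / 2 then x else x - (n + 1) / 2 := by
    intro x hx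
    split_ifs with h
    · exact Nat.mod_eq_of_lt h
    · rw [Nat.mod_eq_sub_mod (by omega), Nat.mod_eq_of_lt (by omega)]
  have hadd : ∀ k < n, (u + k) % n = if u + k < n then u + k else u + k - n := by
    intro k hk
    split_ifs with h
    · exact Nat.mod_eq_of_lt h
    · rw [Nat.mod_eq_sub_mod (by omega), Nat.mod_eq_of_lt (by omega)]
  rw [hmod _ (Nat.mod_lt _ (by omega)), hmod _ (Nat.mod_lt _ (by omega)), hadd i (by omega),
    hadd j (by omega)]
  split_ifs <;> omega

namespace SimpleGraph

variable {G : SimpleGraph V} {c : Sym2 V → ℕ} {k : ℕ}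

theorem Walk.IsRainbow.length_le {u v : V} {p : G.Walk u v} (hp : p.IsRainbow c)
    (hc : G.ColorsLE c k) : p.length ≤ k := by
  have hsub : (p.edges.map c).toFinset ⊆ Finset.range k := by
    intro x hx
    obtain ⟨e, he, rfl⟩ := List.mem_map.1 (List.mem_toFinset.1 hx)
    exact Finset.mem_range.2 (hc e (p.edges_subset_edgeSet he))
  simpa [List.toFinset_card_of_nodup hp] using Finset.card_le_card hsub

theorem Walk.IsRainbow.bypass [DecidableEq V] {u v : V} {p : G.Walk u v} (hp : p.IsRainbow c) :
    p.bypass.IsRainbow c :=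
  hp.sublist (p.edges_bypass_sublist_edges.map c)

theorem Walk.IsRainbow.reverse {u v : V} {p : G.Walk u v} (hp : p.IsRainbow c) :
    p.reverse.IsRainbow c := by
  rw [Walk.IsRainbow, Walk.edges_reverse, List.map_reverse, List.nodup_reverse]
  exact hp

theorem rainbowConnected_of_forall_exists_isRainbow
    (h : ∀ u v : V, ∃ p : G.Walk u v, p.IsRainbow c) : G.RainbowConnected c := by
  classical
  intro u v
  obtain ⟨p, hp⟩ := h u v
  exact ⟨p.bypass, p.bypass_isPath, hp.bypass⟩

theorem ColorsLE.mono {k' : ℕ} (hc : G.ColorsLE c k) (hk : k ≤ k') : G.ColorsLE c k' :=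
  fun e he => (hc e he).trans_le hk

theorem rcNumber_eq_of_isLeast {m : ℕ} (hc : G.ColorsLE c m) (hrc : G.RainbowConnected c)
    (hmin : ∀ c' k, G.ColorsLE c' k → G.RainbowConnected c' → m ≤ k) : G.rcNumber = m :=
  IsLeast.csInf_eq ⟨⟨c, hc, hrc⟩, fun k ⟨c', hc', hrc'⟩ => hmin c' k hc' hrc'⟩

theorem prcNumber_eq_of_isLeast {m : ℕ} (hc : G.ColorsLE c m) (hprop : G.IsProperEdgeColoring c)
    (hrc : G.RainbowConnected c)
    (hmin : ∀ c' k, G.ColorsLE c' k → G.RainbowConnected c' → m ≤ k) : G.prcNumber = m :=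
  IsLeast.csInf_eq ⟨⟨c, hc, hprop, hrc⟩, fun k ⟨c', hc', _, hrc'⟩ => hmin c' k hc' hrc'⟩

end SimpleGraph

namespace SimpleGraph

open Fin.NatCast Fin.CommRing

variable {n : ℕ} [NeZero n]

theorem cycleGraph_adj_iff (hn : 2 ≤ n) {u v : Fin n} :
    (cycleGraph n).Adj u v ↔ v = u + 1 ∨ u = v + 1 := by
  obtain ⟨k, rfl⟩ : ∃ k, n = k + 2 := ⟨n - 2, by omega⟩
  rw [cycleGraph_adj, sub_eq_iff_eq_add, sub_eq_iff_eq_add, add_comm 1 v, add_comm 1 u]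
  tauto

theorem cycleGraph_adj_add_one (hn : 2 ≤ n) (u : Fin n) : (cycleGraph n).Adj u (u + 1) :=
  (cycleGraph_adj_iff hn).2 (Or.inl rfl)

def cycleArcEdges (u : Fin n) (l : ℕ) : List (Sym2 (Fin n)) :=
  (List.range l).map fun j : ℕ => s(u + j, u + j + 1)

theorem cycleArcEdges_succ (u : Fin n) (l : ℕ) :
    cycleArcEdges u (l + 1) = s(u, u + 1) :: cycleArcEdges (u + 1) l := by
  simp only [cycleArcEdges, List.range_succ_eq_map, List.map_cons, List.map_map]
  congr 1
  · simp
  · refine List.map_congr_left fun j _ => ?_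
    simp only [Function.comp_apply]
    congr 1 <;> push_cast <;> ring

def cycleArc (hn : 2 ≤ n) (u : Fin n) : (l : ℕ) → (cycleGraph n).Walk u (u + l)
  | 0 => Walk.nil.copy rfl (by simp)
  | l + 1 => ((cycleArc hn (u + 1) l).cons (cycleGraph_adj_add_one hn u)).copy rfl
      (by push_cast; ring)

theorem edges_cycleArc (hn : 2 ≤ n) (u : Fin n) (l : ℕ) :
    (cycleArc hn u l).edges = cycleArcEdges u l := by
  induction l generalizing u with
  | zero => simp [cycleArc, cycleArcEdges]
  | succ l ih => simp [cycleArc, cycleArcEdges_succ, ih]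

theorem two_le_of_cycleGraph_adj {u v : Fin n} (h : (cycleGraph n).Adj u v) : 2 ≤ n := by
  by_contra! hn
  obtain rfl : n = 1 := by have := NeZero.pos n; omega
  exact h.ne (Subsingleton.elim u v)

theorem Walk.exists_int_displacement {u v : Fin n} (p : (cycleGraph n).Walk u v) :
    ∃ d : ℤ, v = u + d ∧ |d| ≤ p.length ∧
      (d = p.length → p.edges = cycleArcEdges u p.length) := by
  induction p with
  | nil => exact ⟨0, by simp, by simp, fun _ => by simp [cycleArcEdges]⟩
  | @cons u w v h q ih =>
    obtain ⟨d, rfl, hd, hfwd⟩ := ih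
    rcases (cycleGraph_adj_iff (two_le_of_cycleGraph_adj h)).1 h with rfl | rfl
    · refine ⟨d + 1, by push_cast; ring, ?_, fun hdl => ?_⟩
      · simp only [Walk.length_cons, Nat.cast_succ]
        exact (abs_add_le _ _).trans (by simp [hd])
      · simp only [Walk.length_cons, Nat.cast_succ, add_left_inj] at hdl
        rw [Walk.edges_cons, Walk.length_cons, cycleArcEdges_succ, hfwd hdl]
    · refine ⟨d - 1, by push_cast; ring, ?_, fun hdl => ?_⟩
      · simp only [Walk.length_cons, Nat.cast_succ]
        exact (abs_sub _ _).trans (by simp [hd])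
      · simp only [Walk.length_cons, Nat.cast_succ] at hdl
        linarith [le_of_abs_le hd]

theorem Walk.dvd_displacement_sub {u : Fin n} {L : ℕ}
    (p : (cycleGraph n).Walk u (u + L)) :
    ∃ d : ℤ, (n : ℤ) ∣ d - L ∧ |d| ≤ p.length ∧
      (d = p.length → p.edges = cycleArcEdges u p.length) := by
  obtain ⟨d, hd, hlen, hfwd⟩ := p.exists_int_displacement
  refine ⟨d, (CharP.intCast_eq_zero_iff (Fin n) n _).1 ?_, hlen, hfwd⟩
  push_cast
  rw [sub_eq_zero]
  exact (add_left_cancel hd).symm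

theorem Walk.le_length_of_cycleGraph {L : ℕ} (hL : 2 * L ≤ n) {u : Fin n}
    (p : (cycleGraph n).Walk u (u + L)) : L ≤ p.length := by
  obtain ⟨d, ⟨q, hq⟩, hlen, -⟩ := p.dvd_displacement_sub
  have := abs_le.1 hlen
  rcases lt_trichotomy q 0 with hq0 | rfl | hq0 <;> zify at hL ⊢ <;> nlinarith

theorem Walk.edges_eq_cycleArcEdges {L : ℕ} (hL : 2 * L < n) {u : Fin n}
    (p : (cycleGraph n).Walk u (u + L)) (hp : p.length ≤ L) : p.edges = cycleArcEdges u L := by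
  obtain ⟨d, ⟨q, hq⟩, hlen, hfwd⟩ := p.dvd_displacement_sub
  have := abs_le.1 hlen
  obtain rfl : q = 0 := by
    rcases lt_trichotomy q 0 with hq0 | hq0 | hq0 <;> zify at hL hp <;> nlinarith
  have hd : d = L := by linarith
  have hpL : p.length = L := by zify at hp ⊢; linarith
  rw [hpL] at hfwd
  exact hfwd hd

theorem not_rainbowConnected_cycleGraph_of_colorsLE {L : ℕ} (hL : 2 ≤ L) (hn : n = 2 * L + 1)
    {c : Sym2 (Fin n) → ℕ} (hc : (cycleGraph n).ColorsLE c L) :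
    ¬ (cycleGraph n).RainbowConnected c := by
  intro hrc
  set a : ℕ → ℕ := fun t => c s((t : Fin n), (t : Fin n) + 1) with ha
  have hwin : ∀ t, ((List.range L).map fun j => a (t + j)).Nodup := by
    intro t
    obtain ⟨p, -, hp⟩ := hrc (t : Fin n) ((t : Fin n) + L)
    have hlen := hp.length_le hc
    rw [Walk.IsRainbow, p.edges_eq_cycleArcEdges (by omega) hlen, cycleArcEdges,
      List.map_map] at hp
    simpa [ha, Function.comp_def] using hp
  have hper : Function.Periodic a L := Function.periodic_of_forall_nodup_window
    (fun t => hc _ (cycleGraph_adj_add_one (by omega) _)) hwin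
  have hconst : a 1 = a 0 := calc
    a 1 = a (1 + 2 * L) := ((hper.nat_mul 2) 1).symm
    _ = a 0 := by simp only [ha]; rw [add_comm 1, ← hn, Fin.natCast_self, Nat.cast_zero]
  have := List.inj_on_of_nodup_map (hwin 0) (List.mem_range.2 (show 1 < L by omega))
    (List.mem_range.2 (show 0 < L by omega)) (by simpa using hconst)
  omega

theorem le_of_rainbowConnected_cycleGraph (hn : 4 ≤ n) {c : Sym2 (Fin n) → ℕ} {k : ℕ}
    (hc : (cycleGraph n).ColorsLE c k) (hrc : (cycleGraph n).RainbowConnected c) :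
    (n + 1) / 2 ≤ k := by
  obtain ⟨L, rfl | rfl⟩ := Nat.even_or_odd' n
  · obtain ⟨p, -, hp⟩ := hrc 0 (0 + L)
    have := p.le_length_of_cycleGraph le_rfl
    have := hp.length_le hc
    omega
  · by_contra! hk
    exact not_rainbowConnected_cycleGraph_of_colorsLE (by omega) rfl (hc.mono (by omega)) hrc

/-- For `3 ≤ n` every edge of `C_n` is `s(i, i + 1)` for a unique `i` (`cycleEdgeIndex_mk`);
other pairs get the junk index `0`. -/
noncomputable def cycleEdgeIndex (e : Sym2 (Fin n)) : Fin n :=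
  if h : ∃ i : Fin n, s(i, i + 1) = e then h.choose else 0

theorem cycleEdgeIndex_mk (hn : 3 ≤ n) (i : Fin n) : cycleEdgeIndex s(i, i + 1) = i := by
  have h : ∃ j : Fin n, s(j, j + 1) = s(i, i + 1) := ⟨i, rfl⟩
  rw [cycleEdgeIndex, dif_pos h]
  rcases Sym2.eq_iff.1 h.choose_spec with ⟨hi, -⟩ | ⟨hi, hi'⟩
  · exact hi
  · have h2 : ((2 : ℕ) : Fin n) = 0 := by
      rw [hi] at hi'
      linear_combination (norm := skip) hi'
      push_cast; ring
    rw [Fin.natCast_eq_zero] at h2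
    exact absurd (Nat.le_of_dvd two_pos h2) (by omega)

noncomputable def cycleRainbowColoring (n : ℕ) [NeZero n] (e : Sym2 (Fin n)) : ℕ :=
  (cycleEdgeIndex e).val % ((n + 1) / 2)

theorem colorsLE_cycleRainbowColoring :
    (cycleGraph n).ColorsLE (cycleRainbowColoring n) ((n + 1) / 2) :=
  fun _ _ => Nat.mod_lt _ (by have := NeZero.pos n; omega)

theorem cycleRainbowColoring_mk (hn : 3 ≤ n) (u : Fin n) (j : ℕ) :
    cycleRainbowColoring n s(u + j, u + j + 1) = (u.val + j) % n % ((n + 1) / 2) := by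
  rw [cycleRainbowColoring, cycleEdgeIndex_mk hn, Fin.val_add, Fin.val_natCast, Nat.add_mod_mod]

theorem nodup_map_cycleRainbowColoring_cycleArcEdges (hn : 3 ≤ n) (u : Fin n) {l : ℕ}
    (hl : l ≤ n / 2) : ((cycleArcEdges u l).map (cycleRainbowColoring n)).Nodup := by
  rw [cycleArcEdges, List.map_map]
  refine List.Nodup.map_on (fun i hi j hj hij => ?_) List.nodup_range
  rw [List.mem_range] at hi hj
  simp only [Function.comp_apply, cycleRainbowColoring_mk hn] at hij
  by_contra hne
  rcases Nat.lt_or_gt_of_ne hne with h | h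
  · exact Nat.add_mod_mod_ne_of_lt_half u.isLt h (by omega) hij
  · exact Nat.add_mod_mod_ne_of_lt_half u.isLt h (by omega) hij.symm

theorem isProperEdgeColoring_cycleRainbowColoring (hn : 4 ≤ n) :
    (cycleGraph n).IsProperEdgeColoring (cycleRainbowColoring n) := by
  have hsucc : ∀ w : Fin n,
      cycleRainbowColoring n s(w, w + 1) ≠ cycleRainbowColoring n s(w + 1, w + 1 + 1) := by
    intro w
    have := nodup_map_cycleRainbowColoring_cycleArcEdges (by omega) w (l := 2) (by omega)
    simpa [cycleArcEdges, List.range_succ] using this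
  intro u v w huv huw hvw
  rcases (cycleGraph_adj_iff (by omega)).1 huv with rfl | rfl
  · rcases (cycleGraph_adj_iff (by omega)).1 huw with rfl | rfl
    · exact absurd rfl hvw
    · rw [Sym2.eq_swap (a := w + 1) (b := w)]
      exact (hsucc w).symm
  · rcases (cycleGraph_adj_iff (by omega)).1 huw with rfl | h
    · rw [Sym2.eq_swap (a := v + 1) (b := v)]
      exact hsucc v
    · exact absurd (add_right_cancel h) hvw

theorem isRainbow_cycleArc (hn : 3 ≤ n) (u : Fin n) {l : ℕ} (hl : l ≤ n / 2) :
    (cycleArc (by omega) u l).IsRainbow (cycleRainbowColoring n) := by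
  rw [Walk.IsRainbow, edges_cycleArc]
  exact nodup_map_cycleRainbowColoring_cycleArcEdges hn u hl

theorem rainbowConnected_cycleRainbowColoring (hn : 3 ≤ n) :
    (cycleGraph n).RainbowConnected (cycleRainbowColoring n) := by
  refine rainbowConnected_of_forall_exists_isRainbow fun u v => ?_
  have hsub : ∀ x y : Fin n, y = x + (y - x).val := fun x y => by simp
  by_cases h : (v - u).val ≤ n / 2
  · exact ⟨(cycleArc (by omega) u _).copy rfl (hsub u v).symm, by
      simpa [Walk.IsRainbow] using isRainbow_cycleArc hn u h⟩
  · have h' : (u - v).val ≤ n / 2 := by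
      rw [← neg_sub, Fin.val_neg', Nat.mod_eq_of_lt (by omega)]
      omega
    exact ⟨((cycleArc (by omega) v _).copy rfl (hsub v u).symm).reverse, by
      simpa [Walk.IsRainbow] using (isRainbow_cycleArc hn v h').reverse⟩

end SimpleGraph

theorem stmt5 (n : ℕ) (hn : 4 ≤ n) :
    (SimpleGraph.cycleGraph n).prcNumber = (n + 1) / 2 ∧
    (SimpleGraph.cycleGraph n).rcNumber = (n + 1) / 2 := by
  have : NeZero n := ⟨by omega⟩
  have hrc := rainbowConnected_cycleRainbowColoring (n := n) (by omega)
  exact ⟨prcNumber_eq_of_isLeast colorsLE_cycleRainbowColoring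
      (isProperEdgeColoring_cycleRainbowColoring hn) hrc
      fun _ _ => le_of_rainbowConnected_cycleGraph hn,
    rcNumber_eq_of_isLeast colorsLE_cycleRainbowColoring hrc
      fun _ _ => le_of_rainbowConnected_cycleGraph hn⟩
end

section
/- Let G be a connected graph of order n ≥ 3 such that d(u) + d(v) ≥ n - 1 for every pair of non-adjacent vertices u, v of G. Then prc(G) = χ'(G). -/
/-! The degree condition forces any two non-adjacent vertices to have a common neighbour, so `G`
has diameter at most two. A path of length at most two is rainbow under every proper edge
colouring, since its two edges meet at the middle vertex; hence every proper edge colouring is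
rainbow connecting, and the two minima coincide. -/

open SimpleGraph

variable {V : Type*}

namespace SimpleGraph

variable (G : SimpleGraph V)

theorem exists_adj_adj_of_card_sub_one_le_degree_add_degree [Fintype V] [DecidableEq V]
    [DecidableRel G.Adj] {u v : V} (huv : u ≠ v) (hadj : ¬ G.Adj u v)
    (hdeg : Fintype.card V - 1 ≤ G.degree u + G.degree v) : ∃ w, G.Adj u w ∧ G.Adj v w := by
  have hsub : G.neighborFinset u ∪ G.neighborFinset v ⊆ Finset.univ \ {u, v} := by
    intro x hx
    simp only [Finset.mem_union, mem_neighborFinset] at hx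
    simp only [Finset.mem_sdiff, Finset.mem_univ, true_and, Finset.mem_insert,
      Finset.mem_singleton, not_or]
    rcases hx with hux | hvx
    · exact ⟨hux.ne', fun hxv => hadj (hxv ▸ hux)⟩
    · exact ⟨fun hxu => hadj (hxu ▸ hvx).symm, hvx.ne'⟩
  have hcard : (Finset.univ \ ({u, v} : Finset V)).card + 2 = Fintype.card V := by
    rw [← Finset.card_pair huv, Finset.card_sdiff_add_card_eq_card (Finset.subset_univ _),
      Finset.card_univ]
  have hunion := Finset.card_le_card hsub
  have hinter := Finset.card_inter_add_card_union (G.neighborFinset u) (G.neighborFinset v)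
  rw [← card_neighborFinset_eq_degree, ← card_neighborFinset_eq_degree] at hdeg
  obtain ⟨w, hw⟩ : (G.neighborFinset u ∩ G.neighborFinset v).Nonempty := by
    rw [← Finset.card_pos]
    omega
  simp only [Finset.mem_inter, mem_neighborFinset] at hw
  exact ⟨w, hw⟩

variable {G}

theorem IsProperEdgeColoring.isRainbow_cons_cons {c : Sym2 V → ℕ} (hc : G.IsProperEdgeColoring c)
    {u w v : V} (huw : G.Adj u w) (hwv : G.Adj w v) (huv : u ≠ v) :
    (Walk.cons huw (Walk.cons hwv Walk.nil)).IsRainbow c := by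
  have hcol : c s(u, w) ≠ c s(w, v) := by
    simpa only [Sym2.eq_swap] using hc huw.symm hwv huv
  simpa [Walk.IsRainbow] using hcol

theorem IsProperEdgeColoring.rainbowConnected {c : Sym2 V → ℕ} (hc : G.IsProperEdgeColoring c)
    (hdiam : ∀ u v, u ≠ v → ¬ G.Adj u v → ∃ w, G.Adj u w ∧ G.Adj v w) :
    G.RainbowConnected c := by
  intro u v
  by_cases huv : u = v
  · subst huv
    exact ⟨Walk.nil, Walk.IsPath.nil, by simp [Walk.IsRainbow]⟩
  by_cases hadj : G.Adj u v
  · exact ⟨Walk.cons hadj Walk.nil, by simp [huv], by simp [Walk.IsRainbow]⟩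
  obtain ⟨w, huw, hvw⟩ := hdiam u v huv hadj
  refine ⟨Walk.cons huw (Walk.cons hvw.symm Walk.nil), ?_, hc.isRainbow_cons_cons huw hvw.symm huv⟩
  simp [Walk.isPath_def, huv, huw.ne, hvw.ne']

theorem prcNumber_eq_chromaticIndex_of_forall_rainbowConnected
    (h : ∀ c, G.IsProperEdgeColoring c → G.RainbowConnected c) :
    G.prcNumber = G.chromaticIndex := by
  unfold prcNumber chromaticIndex
  congr 1
  ext k
  exact ⟨fun ⟨c, hk, hc, _⟩ => ⟨c, hk, hc⟩, fun ⟨c, hk, hc⟩ => ⟨c, hk, hc, h c hc⟩⟩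

end SimpleGraph

theorem stmt13_general {V : Type*} [Fintype V] [DecidableEq V] (G : SimpleGraph V) [DecidableRel G.Adj]
    (hdeg : ∀ u v : V, u ≠ v → ¬ G.Adj u v →
      Fintype.card V - 1 ≤ G.degree u + G.degree v) :
    G.prcNumber = G.chromaticIndex :=
  prcNumber_eq_chromaticIndex_of_forall_rainbowConnected fun _ hc =>
    hc.rainbowConnected fun _ _ huv hadj =>
      G.exists_adj_adj_of_card_sub_one_le_degree_add_degree huv hadj (hdeg _ _ huv hadj)

theorem stmt13 {V : Type*} [Fintype V] [DecidableEq V] (G : SimpleGraph V) [DecidableRel G.Adj]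
    (hconn : G.Connected) (hn : 3 ≤ Fintype.card V)
    (hdeg : ∀ u v : V, u ≠ v → ¬ G.Adj u v →
      Fintype.card V - 1 ≤ G.degree u + G.degree v) :
    G.prcNumber = G.chromaticIndex :=
  stmt13_general G hdeg
end

section
/- Let G be a nontrivial connected graph of order n ≥ 2 with average degree d̄(G) = 2|E(G)|/n. Then prc(G) ≥ ⌈d̄(G)⌉. -/
/-!
The infimum defining `prc(G)` is attained, because colouring the edges of a connected graph
injectively is proper and makes every path rainbow. In a proper colouring the edges at a vertex
get distinct colours, so every degree is at most `prc(G)`, and summing degrees gives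
`2|E(G)| ≤ n · prc(G)`.
-/

open SimpleGraph

variable {V : Type*}

open Finset

namespace SimpleGraph

variable {G : SimpleGraph V} {c : Sym2 V → ℕ} {k : ℕ}

theorem isProperEdgeColoring_of_injective (hc : Function.Injective c) :
    G.IsProperEdgeColoring c := by
  intro u v w _ huw hvw h
  rcases Sym2.eq_iff.1 (hc h) with ⟨-, rfl⟩ | ⟨rfl, -⟩
  · exact hvw rfl
  · exact G.irrefl huw

theorem Connected.rainbowConnected_of_injective (hG : G.Connected) (hc : Function.Injective c) :
    G.RainbowConnected c := fun u v => by
  classical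
  obtain ⟨p, hp⟩ := (hG u v).some.toPath
  exact ⟨p, hp, hp.isTrail.edges_nodup.map hc⟩

theorem Connected.exists_coloring_prcNumber [Finite V] (hG : G.Connected) :
    ∃ c, G.ColorsLE c G.prcNumber ∧ G.IsProperEdgeColoring c ∧ G.RainbowConnected c := by
  classical
  obtain ⟨n, ⟨e⟩⟩ := Finite.exists_equiv_fin (Sym2 V)
  have hinj : Function.Injective fun x => (e x : ℕ) := Fin.val_injective.comp e.injective
  exact Nat.sInf_mem (s := {k | ∃ c : Sym2 V → ℕ, G.ColorsLE c k ∧ G.IsProperEdgeColoring c ∧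
    G.RainbowConnected c}) ⟨n, fun x => e x, fun x _ => (e x).isLt,
    isProperEdgeColoring_of_injective hinj, hG.rainbowConnected_of_injective hinj⟩

theorem IsProperEdgeColoring.degree_le (hc : G.IsProperEdgeColoring c) (hk : G.ColorsLE c k)
    (v : V) [Fintype (G.neighborSet v)] : G.degree v ≤ k := by
  rw [← card_neighborFinset_eq_degree, ← card_range k]
  refine card_le_card_of_injOn (fun w => c s(v, w)) (fun w hw => ?_) (fun w₁ hw₁ w₂ hw₂ h => ?_)
  · exact mem_range.2 (hk _ ((mem_neighborFinset G v w).1 hw))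
  · by_contra hne
    exact hc ((mem_neighborFinset G v w₁).1 hw₁) ((mem_neighborFinset G v w₂).1 hw₂) hne h

theorem two_mul_card_edgeFinset_le [Fintype V] [DecidableEq V] [DecidableRel G.Adj]
    (h : ∀ v, G.degree v ≤ k) : 2 * #G.edgeFinset ≤ Fintype.card V * k := by
  calc 2 * #G.edgeFinset = ∑ v, G.degree v := G.sum_degrees_eq_twice_card_edges.symm
    _ ≤ ∑ _v : V, k := sum_le_sum fun v _ => h v
    _ = Fintype.card V * k := by rw [sum_const, card_univ, smul_eq_mul]

end SimpleGraph

theorem stmt17_general {V : Type*} [Fintype V] [DecidableEq V] (G : SimpleGraph V) [DecidableRel G.Adj]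
    (hconn : G.Connected) :
    (⌈(2 * (G.edgeFinset.card : ℝ)) / (Fintype.card V : ℝ)⌉ : ℤ) ≤ (G.prcNumber : ℤ) := by
  obtain ⟨c, hk, hc, -⟩ := hconn.exists_coloring_prcNumber
  have hedges := SimpleGraph.two_mul_card_edgeFinset_le fun v => hc.degree_le hk v
  have : Nonempty V := hconn.nonempty
  rw [Int.ceil_le, div_le_iff₀ (by positivity)]
  exact_mod_cast hedges.trans_eq (mul_comm _ _)

theorem stmt17 {V : Type*} [Fintype V] [DecidableEq V] (G : SimpleGraph V) [DecidableRel G.Adj]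
    (hconn : G.Connected) (hn : 2 ≤ Fintype.card V) :
    (⌈(2 * (G.edgeFinset.card : ℝ)) / (Fintype.card V : ℝ)⌉ : ℤ) ≤ (G.prcNumber : ℤ) :=
  stmt17_general G hconn
end
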